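/- Let P, Q be probability distributions on ℝ with continuously differentiable CDFs F_X, F_Y and everywhere positive densities f_X, f_Y, so that F_X is strictly increasing with differentiable inverse F_X⁻¹. Then the random variable V = min{F_X(Y), 1 − F_X(Y)} with Y ∼ Q has probability density f_V(z) = f_Y(F_X⁻¹(z)) / f_X(F_X⁻¹(z)) + f_Y(F_X⁻¹(1 − z)) / f_X(F_X⁻¹(1 − z)) for z ∈ (0, 1/2). -/

import Mathlib

/-! Being a C¹ bijection of `ℝ` onto `(0, 1)` with inverse `FXinv`, the CDF `FX` transports
the density `fY` to the density `fY (FXinv u) / fX (FXinv u)` of `FX Y` on `(0, 1)` (change of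
variables `u = FX y`). The fold `u ↦ min u (1 - u)` is the identity on `(0, 1/2]` and the
measure-preserving reflection `u ↦ 1 - u` on `(1/2, 1)`, so it adds up the density at `z` and
at `1 - z`. -/

open MeasureTheory Set Function
open scoped ENNReal

theorem toReal_withDensity_ofReal_apply {α : Type*} [MeasurableSpace α] {μ : Measure α}
    {f : α → ℝ} (hf : 0 ≤ᵐ[μ] f) (hfm : AEStronglyMeasurable f μ) {s : Set α}
    (hs : MeasurableSet s) :
    ((μ.withDensity fun x => ENNReal.ofReal (f x)) s).toReal = ∫ x in s, f x ∂μ := by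
  rw [withDensity_apply _ hs, integral_eq_lintegral_of_nonneg_ae (ae_restrict_of_ae hf)
    hfm.restrict]

theorem integrable_of_isFiniteMeasure_withDensity_ofReal {α : Type*} [MeasurableSpace α]
    {μ : Measure α} {f : α → ℝ} (hf : 0 ≤ᵐ[μ] f) (hfm : AEStronglyMeasurable f μ)
    [IsFiniteMeasure (μ.withDensity fun x => ENNReal.ofReal (f x))] : Integrable f μ := by
  refine ⟨hfm, (hasFiniteIntegral_iff_ofReal hf).2 ?_⟩
  simpa [withDensity_apply] using
    measure_lt_top (μ.withDensity fun x => ENNReal.ofReal (f x)) univ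

theorem hasDerivAt_integral_Iic {f : ℝ → ℝ} (hf : Continuous f) (hfi : Integrable f)
    (x : ℝ) :
    HasDerivAt (fun y => ∫ t in Iic y, f t) (f x) x := by
  have hsplit :
      (fun y => ∫ t in Iic y, f t) = fun y => (∫ t in Iic 0, f t) + ∫ t in 0..y, f t := by
    funext y
    rw [← intervalIntegral.integral_Iic_sub_Iic hfi.integrableOn hfi.integrableOn]
    ring
  rw [hsplit]
  exact (intervalIntegral.integral_hasDerivAt_right hfi.intervalIntegrable
    (hf.stronglyMeasurableAtFilter _ _) hf.continuousAt).const_add _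

theorem hasDerivAt_toReal_withDensity_ofReal_Iic {f : ℝ → ℝ} (hf : Continuous f)
    (hf0 : ∀ x, 0 ≤ f x) [IsFiniteMeasure (volume.withDensity fun x => ENNReal.ofReal (f x))]
    (x : ℝ) :
    HasDerivAt (fun y => ((volume.withDensity fun t => ENNReal.ofReal (f t)) (Iic y)).toReal)
      (f x) x := by
  have hnn : 0 ≤ᵐ[volume] f := ae_of_all _ hf0
  have hcdf : (fun y => ((volume.withDensity fun t => ENNReal.ofReal (f t)) (Iic y)).toReal) =
      fun y => ∫ t in Iic y, f t :=
    funext fun y => toReal_withDensity_ofReal_apply hnn hf.aestronglyMeasurable measurableSet_Iic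
  rw [hcdf]
  exact hasDerivAt_integral_Iic hf
    (integrable_of_isFiniteMeasure_withDensity_ofReal hnn hf.aestronglyMeasurable) x

theorem range_eq_Ioo_of_strictMono {α β : Type*} [Preorder α] [NoMinOrder α] [NoMaxOrder α]
    [Preorder β] {F : α → β} {a b : β} (hF : StrictMono F) (hFab : ∀ x, F x ∈ Icc a b)
    (hsurj : Ioo a b ⊆ range F) : range F = Ioo a b := by
  refine Subset.antisymm ?_ hsurj
  rintro _ ⟨x, rfl⟩
  obtain ⟨y, hyx⟩ := exists_lt x
  obtain ⟨z, hxz⟩ := exists_gt x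
  exact ⟨(hFab y).1.trans_lt (hF hyx), (hF hxz).trans_le (hFab z).2⟩

theorem measurable_indicator_range_comp {α β γ : Type*} [MeasurableSpace α] [MeasurableSpace β]
    [MeasurableSpace γ] [Zero γ] {F : α → β} {G : β → α} (hF : MeasurableEmbedding F)
    (hGF : LeftInverse G F) {ψ : α → γ} (hψ : Measurable ψ) :
    Measurable ((range F).indicator (ψ ∘ G)) := by
  convert hF.measurable_extend hψ (measurable_const (a := 0)) using 1
  funext u
  by_cases hu : u ∈ range F
  · obtain ⟨x, rfl⟩ := hu
    simp [hGF x, hF.injective.extend_apply]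
  · simp [hu, extend_apply' _ _ _ (fun ⟨x, hx⟩ => hu ⟨x, hx⟩)]

theorem ofReal_comp_indicator {α : Type*} (s : Set α) (g : α → ℝ) :
    (fun u => ENNReal.ofReal (s.indicator g u)) = s.indicator fun u => ENNReal.ofReal (g u) :=
  (indicator_comp_of_zero ENNReal.ofReal_zero).symm

theorem map_withDensity_ofReal_of_hasDerivAt {F G f φ : ℝ → ℝ}
    (hF : ∀ x, HasDerivAt F (f x) x) (hf : ∀ x, 0 < f x) (hGF : LeftInverse G F) :
    (volume.withDensity fun x => ENNReal.ofReal (φ x)).map F =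
      volume.withDensity fun u =>
        ENNReal.ofReal ((range F).indicator (fun u => φ (G u) / f (G u)) u) := by
  have hFc : Continuous F := continuous_iff_continuousAt.2 fun x => (hF x).continuousAt
  ext A hA
  have hpre : MeasurableSet (F ⁻¹' A) := hFc.measurable hA
  rw [Measure.map_apply hFc.measurable hA, withDensity_apply _ hpre, ofReal_comp_indicator,
    withDensity_apply _ hA,
    setLIntegral_indicator (measurableSet_range_of_continuous_injective hFc hGF.injective),
    ← image_preimage_eq_range_inter,
    lintegral_image_eq_lintegral_abs_deriv_mul hpre (fun x _ => (hF x).hasDerivWithinAt)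
      hGF.injective.injOn]
  refine setLIntegral_congr_fun hpre fun x _ => ?_
  rw [hGF x, abs_of_pos (hf x), ← ENNReal.ofReal_mul (hf x).le,
    mul_div_cancel₀ _ (hf x).ne']

theorem MeasureTheory.MeasurePreserving.map_withDensity_comp {α β : Type*} [MeasurableSpace α]
    [MeasurableSpace β] {μ : Measure α} {ν : Measure β} {e : α → β}
    (he : MeasurePreserving e μ ν) (hemb : MeasurableEmbedding e) (h : β → ℝ≥0∞) :
    (μ.withDensity (h ∘ e)).map e = ν.withDensity h := by
  ext s hs
  rw [hemb.map_apply, withDensity_apply _ (hemb.measurable hs), withDensity_apply _ hs]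
  exact he.setLIntegral_comp_preimage_emb hemb h s

theorem measurePreserving_one_sub_restrict_Ioo :
    MeasurePreserving (fun u : ℝ => 1 - u) (volume.restrict (Ioo (1 / 2) 1))
      (volume.restrict (Ioo 0 (1 / 2))) := by
  have := (Measure.measurePreserving_sub_left volume (1 : ℝ)).restrict_preimage_emb
    (MeasurableEquiv.subLeft (1 : ℝ)).measurableEmbedding (Ioo 0 (1 / 2))
  rwa [preimage_const_sub_Ioo, sub_zero, show (1 : ℝ) - 1 / 2 = 1 / 2 by norm_num] at this

theorem map_min_one_sub_withDensity {h : ℝ → ℝ≥0∞} (hh : Measurable h) :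
    (volume.withDensity ((Ioo 0 1).indicator h)).map (fun u => min u (1 - u)) =
      volume.withDensity ((Ioo 0 (1 / 2)).indicator fun z => h z + h (1 - z)) := by
  have hfold : Measurable fun u : ℝ => min u (1 - u) := by fun_prop
  have hlower : ((volume.restrict (Ioc 0 (1 / 2))).withDensity h).map (fun u => min u (1 - u)) =
      (volume.restrict (Ioo 0 (1 / 2))).withDensity h := by
    rw [Measure.map_congr (g := id), Measure.map_id,
      Measure.restrict_congr_set Ioo_ae_eq_Ioc.symm]
    refine (withDensity_absolutelyContinuous _ _).ae_le
      (ae_restrict_of_forall_mem measurableSet_Ioc fun u hu => ?_)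
    exact min_eq_left (by linarith [hu.2])
  have hupper : ((volume.restrict (Ioo (1 / 2) 1)).withDensity h).map (fun u => min u (1 - u)) =
      (volume.restrict (Ioo 0 (1 / 2))).withDensity fun z => h (1 - z) := by
    rw [Measure.map_congr (g := fun u => 1 - u),
      ← measurePreserving_one_sub_restrict_Ioo.map_withDensity_comp
        (MeasurableEquiv.subLeft (1 : ℝ)).measurableEmbedding]
    · simp [comp_def]
    · refine (withDensity_absolutelyContinuous _ _).ae_le
        (ae_restrict_of_forall_mem measurableSet_Ioo fun u hu => ?_)
      exact min_eq_right (by linarith [hu.1])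
  rw [withDensity_indicator measurableSet_Ioo,
    ← Ioc_union_Ioo_eq_Ioo (by norm_num) (by norm_num : (1 : ℝ) / 2 < 1),
    Measure.restrict_union ((Ioc_disjoint_Ioi le_rfl).mono_right Ioo_subset_Ioi_self)
      measurableSet_Ioo, withDensity_add_measure, Measure.map_add _ _ hfold, hlower, hupper,
    ← withDensity_add_left hh, withDensity_indicator measurableSet_Ioo]
  rfl

theorem map_min_one_sub_withDensity_ofReal {g : ℝ → ℝ}
    (hg : Measurable ((Ioo 0 1).indicator g)) (hg0 : ∀ u ∈ Ioo 0 1, 0 ≤ g u) :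
    (volume.withDensity fun u => ENNReal.ofReal ((Ioo 0 1).indicator g u)).map
        (fun u => min u (1 - u)) =
      volume.withDensity fun z =>
        ENNReal.ofReal ((Ioo 0 (1 / 2)).indicator (fun z => g z + g (1 - z)) z) := by
  have hsupp : (fun u => ENNReal.ofReal ((Ioo 0 1).indicator g u)) =
      (Ioo 0 1).indicator fun u => ENNReal.ofReal ((Ioo 0 1).indicator g u) := by
    rw [ofReal_comp_indicator, indicator_indicator, inter_self]
  rw [hsupp, map_min_one_sub_withDensity hg.ennreal_ofReal]
  congr 1
  funext z
  by_cases hz : z ∈ Ioo (0 : ℝ) (1 / 2)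
  · have hz1 : z ∈ Ioo (0 : ℝ) 1 := ⟨hz.1, by linarith [hz.2]⟩
    have hz2 : 1 - z ∈ Ioo (0 : ℝ) 1 := ⟨by linarith [hz.2], by linarith [hz.1]⟩
    rw [indicator_of_mem hz, indicator_of_mem hz, indicator_of_mem hz1, indicator_of_mem hz2,
      ENNReal.ofReal_add (hg0 z hz1) (hg0 _ hz2)]
  · rw [indicator_of_notMem hz, indicator_of_notMem hz, ENNReal.ofReal_zero]

theorem hd_cross_density
    (P Q : Measure ℝ) [IsProbabilityMeasure P]
    (fX fY : ℝ → ℝ) (hfXpos : ∀ x, 0 < fX x) (hfYpos : ∀ x, 0 < fY x)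
    (hfXc : Continuous fX) (hfYc : Continuous fY)
    (hP : P = volume.withDensity (fun x => ENNReal.ofReal (fX x)))
    (hQ : Q = volume.withDensity (fun x => ENNReal.ofReal (fY x)))
    (FX : ℝ → ℝ) (hFX : ∀ x, FX x = (P (Iic x)).toReal)
    (FXinv : ℝ → ℝ) (hinv : ∀ z ∈ Ioo (0 : ℝ) 1, FX (FXinv z) = z) :
    Measure.map (fun y => min (FX y) (1 - FX y)) Q =
      volume.withDensity (fun z => ENNReal.ofReal
        (indicator (Ioo (0 : ℝ) (1 / 2))
          (fun z => fY (FXinv z) / fX (FXinv z) + fY (FXinv (1 - z)) / fX (FXinv (1 - z)))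
          z)) := by
  have hFXderiv : ∀ x, HasDerivAt FX (fX x) x := by
    obtain rfl : FX = fun x => (P (Iic x)).toReal := funext hFX
    subst hP
    exact hasDerivAt_toReal_withDensity_ofReal_Iic hfXc fun x => (hfXpos x).le
  have hFXmono : StrictMono FX := strictMono_of_hasDerivAt_pos hFXderiv hfXpos
  have hrange : range FX = Ioo 0 1 := range_eq_Ioo_of_strictMono hFXmono
    (fun x => hFX x ▸ ⟨measureReal_nonneg, measureReal_le_one⟩)
    (fun z hz => ⟨FXinv z, hinv z hz⟩)
  have hleft : LeftInverse FXinv FX := fun x =>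
    hFXmono.injective (hinv _ (hrange ▸ mem_range_self x))
  have hemb : MeasurableEmbedding FX :=
    (continuous_iff_continuousAt.2 fun x => (hFXderiv x).continuousAt).measurableEmbedding
      hFXmono.injective
  calc Q.map (fun y => min (FX y) (1 - FX y))
      = (Q.map FX).map (fun u => min u (1 - u)) := by
        rw [Measure.map_map (by fun_prop) hemb.measurable]; rfl
    _ = (volume.withDensity fun u => ENNReal.ofReal
          ((Ioo 0 1).indicator (fun u => fY (FXinv u) / fX (FXinv u)) u)).map
            (fun u => min u (1 - u)) := by
        rw [hQ, map_withDensity_ofReal_of_hasDerivAt hFXderiv hfXpos hleft, hrange]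
    _ = _ := by
        refine map_min_one_sub_withDensity_ofReal ?_ fun u _ =>
          div_nonneg (hfYpos _).le (hfXpos _).le
        rw [← hrange]
        exact measurable_indicator_range_comp hemb hleft (hfYc.measurable.div hfXc.measurable)
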